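/- arXiv:1207.1479 — 6 statements merged into one kernel-verified Lean document; each statement's English description precedes it below -/
import Mathlib

section
/- For a unit vector v in the tensor product C^m ⊗ C^n with Schmidt coefficients α_1 ≥ α_2 ≥ ... ≥ 0, the supremum of |⟨w|v⟩| over all unit vectors w of Schmidt rank at most k equals the square root of the sum of the squares of the k largest Schmidt coefficients of v. -/
open scoped BigOperators

noncomputable section

/-- Elementary tensor of two vectors. -/
def tens {m n : ℕ} (a : Fin m → ℂ) (b : Fin n → ℂ) : Fin m × Fin n → ℂ :=
  fun p => a p.1 * b p.2

/-- Inner product `⟨w|v⟩`, conjugate-linear in the first argument. -/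
def ip {ι : Type} [Fintype ι] (w v : ι → ℂ) : ℂ :=
  ∑ i, (starRingEnd ℂ) (w i) * v i

/-- Euclidean norm. -/
def nrm {ι : Type} [Fintype ι] (v : ι → ℂ) : ℝ :=
  Real.sqrt (∑ i, Complex.normSq (v i))

/-- Schmidt rank at most `k`: `v` is a sum of `k` elementary tensors. -/
def SRle {m n : ℕ} (k : ℕ) (v : Fin m × Fin n → ℂ) : Prop :=
  ∃ (a : Fin k → Fin m → ℂ) (b : Fin k → Fin n → ℂ),
    v = fun p => ∑ l, a l p.1 * b l p.2

/-- The `s(k)`-vector norm. -/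
def snorm {m n : ℕ} (k : ℕ) (v : Fin m × Fin n → ℂ) : ℝ :=
  sSup { r : ℝ | ∃ w : Fin m × Fin n → ℂ, nrm w = 1 ∧ SRle k w ∧ r = ‖ip w v‖ }

/-- The `S(k)`-operator norm. -/
def Snorm {m n : ℕ} (k : ℕ) (X : Matrix (Fin m × Fin n) (Fin m × Fin n) ℂ) : ℝ :=
  sSup { r : ℝ | ∃ v w : Fin m × Fin n → ℂ, nrm v = 1 ∧ nrm w = 1 ∧ SRle k v ∧ SRle k w ∧
    r = ‖ip w (X.mulVec v)‖ }

/-- `k`-block positivity: `⟨v|X|v⟩ ≥ 0` for all unit vectors of Schmidt rank at most `k`. -/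
def kBlockPos {m n : ℕ} (k : ℕ) (X : Matrix (Fin m × Fin n) (Fin m × Fin n) ℂ) : Prop :=
  ∀ v : Fin m × Fin n → ℂ, nrm v = 1 → SRle k v → 0 ≤ (ip v (X.mulVec v)).re

/-!
Write `w = ∑_{l<k} a_l ⊗ b_l` and let `P` be the orthogonal projection onto the span `K` of the
`b_l`, so `dim K ≤ k`. Since `w ∈ ℂ^m ⊗ K`, `⟨w|v⟩ = ⟨w|(1 ⊗ P) v⟩`, and Cauchy–Schwarz gives
`|⟨w|v⟩|² ≤ ‖w‖² ∑ α_i² t_i` with `t_i = ‖P f_i‖²`. Here `0 ≤ t_i ≤ 1` and, by Bessel's inequality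
in an orthonormal basis of `K`, `∑ t_i ≤ dim K ≤ k`; such a weighted sum of the antitone `α_i²`
is at most the sum of the first `k` of them. Equality is attained by the normalised truncation
`∑_{i<k} α_i e_i ⊗ f_i`.
-/

open scoped InnerProductSpace ComplexConjugate

section InnerProduct

variable {ι : Type} [Fintype ι]

lemma ip_eq_inner (w v : ι → ℂ) : ip w v = ⟪WithLp.toLp 2 w, WithLp.toLp 2 v⟫_ℂ := by
  simp [ip, PiLp.inner_apply, mul_comm]

lemma nrm_eq_norm (v : ι → ℂ) : nrm v = ‖WithLp.toLp 2 v‖ := by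
  simp [nrm, EuclideanSpace.norm_eq, Complex.normSq_eq_norm_sq]

lemma nrm_nonneg (v : ι → ℂ) : 0 ≤ nrm v := Real.sqrt_nonneg _

lemma norm_ip_le (w v : ι → ℂ) : ‖ip w v‖ ≤ nrm w * nrm v := by
  rw [ip_eq_inner, nrm_eq_norm, nrm_eq_norm]
  exact norm_inner_le_norm _ _

lemma ip_self (v : ι → ℂ) : ip v v = ((nrm v ^ 2 : ℝ) : ℂ) := by
  rw [ip_eq_inner, nrm_eq_norm, inner_self_eq_norm_sq_to_K]
  push_cast; rfl

lemma sq_nrm_eq_of_ip_self {v : ι → ℂ} {r : ℝ} (h : ip v v = r) : nrm v ^ 2 = r := by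
  rwa [ip_self, Complex.ofReal_inj] at h

lemma ip_sum_left {I : Type} [Fintype I] (w : I → ι → ℂ) (v : ι → ℂ) :
    ip (∑ l, w l) v = ∑ l, ip (w l) v := by
  simp only [ip, Finset.sum_apply, map_sum, Finset.sum_mul]
  exact Finset.sum_comm

lemma ip_sum_right {I : Type} [Fintype I] (w : ι → ℂ) (v : I → ι → ℂ) :
    ip w (∑ l, v l) = ∑ l, ip w (v l) := by
  simp only [ip, Finset.sum_apply, Finset.mul_sum]
  exact Finset.sum_comm

lemma ip_smul_left (c : ℂ) (w v : ι → ℂ) : ip (c • w) v = conj c * ip w v := by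
  simp [ip, Finset.mul_sum, mul_assoc]

lemma ip_smul_right (c : ℂ) (w v : ι → ℂ) : ip w (c • v) = c * ip w v := by
  simp [ip, Finset.mul_sum, mul_left_comm]

lemma nrm_smul (c : ℂ) (v : ι → ℂ) : nrm (c • v) = ‖c‖ * nrm v := by
  rw [nrm_eq_norm, nrm_eq_norm, WithLp.toLp_smul, norm_smul]

lemma orthonormal_toLp_of_ip {I : Type} [DecidableEq I] {e : I → ι → ℂ}
    (he : ∀ i j, ip (e i) (e j) = if i = j then 1 else 0) :
    Orthonormal ℂ fun i => WithLp.toLp 2 (e i) :=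
  orthonormal_iff_ite.2 fun i j => by rw [← ip_eq_inner, he]

end InnerProduct

section Tensor

variable {m n : ℕ}

lemma tens_zero_right (a : Fin m → ℂ) : tens a (0 : Fin n → ℂ) = 0 := by
  ext; simp [tens]

lemma ip_tens (a c : Fin m → ℂ) (b d : Fin n → ℂ) :
    ip (tens a b) (tens c d) = ip a c * ip b d := by
  simp only [ip, tens, Fintype.sum_prod_type, map_mul, Finset.sum_mul_sum]
  exact Finset.sum_congr rfl fun _ _ => Finset.sum_congr rfl fun _ _ => by ring

lemma ip_sum_tens {I J : Type} [Fintype I] [Fintype J] (a : I → Fin m → ℂ) (b : I → Fin n → ℂ)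
    (c : J → Fin m → ℂ) (d : J → Fin n → ℂ) :
    ip (∑ l, tens (a l) (b l)) (∑ i, tens (c i) (d i)) =
      ∑ l, ∑ i, ip (a l) (c i) * ip (b l) (d i) := by
  rw [ip_sum_left]
  simp only [ip_sum_right, ip_tens]

lemma ip_sum_tens_of_orthonormal {I : Type} [Fintype I] [DecidableEq I] {e : I → Fin m → ℂ}
    (he : ∀ i j, ip (e i) (e j) = if i = j then 1 else 0) (x y : I → Fin n → ℂ) :
    ip (∑ i, tens (e i) (x i)) (∑ i, tens (e i) (y i)) = ∑ i, ip (x i) (y i) := by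
  simp [ip_sum_tens, he]

lemma sq_nrm_sum_tens_of_orthonormal {I : Type} [Fintype I] [DecidableEq I] {e : I → Fin m → ℂ}
    (he : ∀ i j, ip (e i) (e j) = if i = j then 1 else 0) (x : I → Fin n → ℂ) :
    nrm (∑ i, tens (e i) (x i)) ^ 2 = ∑ i, nrm (x i) ^ 2 :=
  sq_nrm_eq_of_ip_self (by simp [ip_sum_tens_of_orthonormal he, ip_self])

lemma SRle_iff_exists_sum_tens (k : ℕ) (w : Fin m × Fin n → ℂ) :
    SRle k w ↔ ∃ (a : Fin k → Fin m → ℂ) (b : Fin k → Fin n → ℂ), w = ∑ l, tens (a l) (b l) := by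
  simp only [SRle, ← Finset.sum_fn]
  rfl

lemma SRle_sum_tens_of_card_le {I : Type} [Fintype I] {k : ℕ} (hI : Fintype.card I ≤ k)
    (a : I → Fin m → ℂ) (b : I → Fin n → ℂ) : SRle k (∑ i, tens (a i) (b i)) := by
  classical
  let emb : I ↪ Fin k := (Fintype.equivFin I).toEmbedding.trans (Fin.castLEEmb hI)
  refine (SRle_iff_exists_sum_tens k _).2 ⟨Function.extend emb a 0, Function.extend emb b 0, ?_⟩
  refine (Fintype.sum_of_injective emb emb.injective (fun i => tens (a i) (b i))
    (fun l => tens (Function.extend emb a 0 l) (Function.extend emb b 0 l))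
    (fun l hl => ?_) fun i => ?_)
  · simp [Function.extend_apply' _ _ _ hl, tens_zero_right]
  · simp [emb.injective.extend_apply]

lemma SRle_sum_tens_of_support {I : Type} [Fintype I] {k : ℕ} (S : Finset I) (hS : S.card ≤ k)
    (a : I → Fin m → ℂ) {b : I → Fin n → ℂ} (hb : ∀ i ∉ S, b i = 0) :
    SRle k (∑ i, tens (a i) (b i)) := by
  rw [← Finset.sum_subset S.subset_univ fun i _ hi => by rw [hb i hi, tens_zero_right],
    ← Finset.sum_coe_sort]
  exact SRle_sum_tens_of_card_le (by simpa using hS) _ _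

end Tensor

lemma sum_norm_sq_starProjection_le_finrank {𝕜 E I : Type*} [RCLike 𝕜] [NormedAddCommGroup E]
    [InnerProductSpace 𝕜 E] [Fintype I] (K : Submodule 𝕜 E) [FiniteDimensional 𝕜 K]
    {f : I → E} (hf : Orthonormal 𝕜 f) :
    ∑ i, ‖K.starProjection (f i)‖ ^ 2 ≤ Module.finrank 𝕜 K := by
  let g := stdOrthonormalBasis 𝕜 K
  have hparseval : ∀ x, ‖K.starProjection x‖ ^ 2 = ∑ j, ‖inner 𝕜 (g j : E) x‖ ^ 2 := fun x => by
    have h := g.sum_sq_norm_inner_right (K.orthogonalProjectionOnto x)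
    simp only [K.inner_orthogonalProjectionOnto_eq_of_mem_left] at h
    rw [K.starProjection_apply, Submodule.norm_coe, h]
  calc ∑ i, ‖K.starProjection (f i)‖ ^ 2 = ∑ j, ∑ i, ‖inner 𝕜 (f i) (g j : E)‖ ^ 2 := by
        simp only [hparseval]
        rw [Finset.sum_comm]
        exact Finset.sum_congr rfl fun j _ => Finset.sum_congr rfl fun i _ => by
          rw [norm_inner_symm]
    _ ≤ ∑ j, ‖(g j : E)‖ ^ 2 := Finset.sum_le_sum fun j _ => hf.sum_inner_products_le _
    _ = Module.finrank 𝕜 K := by simp [Submodule.norm_coe, g.orthonormal.1]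

lemma sum_mul_le_sum_of_forall_le {I : Type*} [Fintype I] (S : Finset I) {β t : I → ℝ} {c : ℝ}
    (hc : 0 ≤ c) (hS : ∀ i ∈ S, c ≤ β i) (hSc : ∀ i ∉ S, β i ≤ c) (ht0 : ∀ i, 0 ≤ t i)
    (ht1 : ∀ i, t i ≤ 1) (ht : ∑ i, t i ≤ S.card) :
    ∑ i, β i * t i ≤ ∑ i ∈ S, β i := by
  classical
  calc ∑ i, β i * t i
      ≤ ∑ i, ((if i ∈ S then β i else 0) + c * (t i - if i ∈ S then 1 else 0)) :=
        Finset.sum_le_sum fun i _ => by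
          by_cases hi : i ∈ S
          · simp only [hi, if_true]; nlinarith [hS i hi, ht1 i]
          · simp only [hi, if_false]; nlinarith [hSc i hi, ht0 i]
    _ = ∑ i ∈ S, β i + c * (∑ i, t i - S.card) := by
        simp only [mul_sub, mul_ite, mul_one, mul_zero, Finset.sum_add_distrib,
          Finset.sum_ite_mem, Finset.univ_inter, Finset.sum_sub_distrib, ← Finset.mul_sum,
          Finset.sum_const, nsmul_eq_mul]
        ring
    _ ≤ ∑ i ∈ S, β i := by nlinarith

lemma sum_mul_le_sum_filter_lt {N k : ℕ} {β t : Fin N → ℝ} (hβ0 : ∀ i, 0 ≤ β i)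
    (hβ : Antitone β) (ht0 : ∀ i, 0 ≤ t i) (ht1 : ∀ i, t i ≤ 1) (ht : ∑ i, t i ≤ k) :
    ∑ i, β i * t i ≤ ∑ i ∈ Finset.univ.filter (fun i : Fin N => (i : ℕ) < k), β i := by
  obtain ⟨c, hc, hlt, hge⟩ : ∃ c, 0 ≤ c ∧ (∀ i : Fin N, (i : ℕ) < k → c ≤ β i) ∧
      ∀ i : Fin N, k ≤ (i : ℕ) → β i ≤ c := by
    by_cases hkN : k < N
    · exact ⟨β ⟨k, hkN⟩, hβ0 _, fun i hi => hβ (Fin.le_def.2 hi.le), fun i hi => hβ hi⟩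
    · exact ⟨0, le_rfl, fun i _ => hβ0 i, fun i hi => absurd i.2 (by omega)⟩
  refine sum_mul_le_sum_of_forall_le _ hc (by simpa using hlt) (by simpa using hge) ht0 ht1 ?_
  have htN : ∑ i, t i ≤ N := by simpa using Finset.sum_le_sum fun i (_ : i ∈ Finset.univ) => ht1 i
  rw [Fin.card_filter_val_lt]
  push_cast
  exact le_min htN ht

section Schmidt

variable {m n N k : ℕ} {α : Fin N → ℝ} {e : Fin N → Fin m → ℂ} {f : Fin N → Fin n → ℂ}

lemma norm_ip_le_of_SRle (he : ∀ i j, ip (e i) (e j) = if i = j then 1 else 0)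
    (hf : ∀ i j, ip (f i) (f j) = if i = j then 1 else 0) (hα0 : ∀ i, 0 ≤ α i)
    (hα : Antitone α) {w : Fin m × Fin n → ℂ} (hw : SRle k w) :
    ‖ip w (∑ i, tens (e i) ((α i : ℂ) • f i))‖ ≤
      nrm w * √(∑ i ∈ Finset.univ.filter (fun i : Fin N => (i : ℕ) < k), α i ^ 2) := by
  obtain ⟨a, b, rfl⟩ := (SRle_iff_exists_sum_tens k w).1 hw
  let K := Submodule.span ℂ (Set.range fun l => WithLp.toLp 2 (b l))
  let P : (Fin n → ℂ) → Fin n → ℂ := fun y => (K.starProjection (WithLp.toLp 2 y)).ofLp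
  have hP : ∀ l y, ip (b l) (P y) = ip (b l) y := fun l y => by
    have hb : WithLp.toLp 2 (b l) ∈ K := Submodule.subset_span ⟨l, rfl⟩
    simp only [P, ip_eq_inner, WithLp.toLp_ofLp, ← K.inner_starProjection_left_eq_right,
      K.starProjection_eq_self_iff.2 hb]
  let t : Fin N → ℝ := fun i => nrm (P (f i)) ^ 2
  have hfo := orthonormal_toLp_of_ip hf
  have ht1 : ∀ i, t i ≤ 1 := fun i => by
    simp only [t, P, nrm_eq_norm, WithLp.toLp_ofLp]
    exact pow_le_one₀ (norm_nonneg _) ((K.norm_starProjection_apply_le _).trans_eq (hfo.1 i))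
  have htk : ∑ i, t i ≤ k := calc
    ∑ i, t i ≤ Module.finrank ℂ K := by
      simpa [t, nrm_eq_norm, P] using sum_norm_sq_starProjection_le_finrank K hfo
    _ ≤ k := by exact_mod_cast (finrank_range_le_card _).trans (by simp)
  have hv' : nrm (∑ i, tens (e i) ((α i : ℂ) • P (f i))) ^ 2 = ∑ i, α i ^ 2 * t i := by
    simp only [sq_nrm_sum_tens_of_orthonormal he, nrm_smul, mul_pow, Complex.norm_real,
      Real.norm_eq_abs, sq_abs, t]
  calc ‖ip (∑ l, tens (a l) (b l)) (∑ i, tens (e i) ((α i : ℂ) • f i))‖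
      = ‖ip (∑ l, tens (a l) (b l)) (∑ i, tens (e i) ((α i : ℂ) • P (f i)))‖ := by
        simp only [ip_sum_tens, ip_smul_right, hP]
    _ ≤ nrm (∑ l, tens (a l) (b l)) * √(∑ i, α i ^ 2 * t i) := by
        rw [← hv', Real.sqrt_sq (nrm_nonneg _)]
        exact norm_ip_le _ _
    _ ≤ _ := by
        refine mul_le_mul_of_nonneg_left (Real.sqrt_le_sqrt ?_) (nrm_nonneg _)
        exact sum_mul_le_sum_filter_lt (fun i => sq_nonneg _)
          (fun i j hij => pow_le_pow_left₀ (hα0 j) (hα hij) 2)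
          (fun i => sq_nonneg _) ht1 htk

lemma exists_SRle_ip_eq_sqrt (he : ∀ i j, ip (e i) (e j) = if i = j then 1 else 0)
    (hf : ∀ i j, ip (f i) (f j) = if i = j then 1 else 0)
    (hpos : 0 < ∑ i ∈ Finset.univ.filter (fun i : Fin N => (i : ℕ) < k), α i ^ 2) :
    ∃ w, nrm w = 1 ∧ SRle k w ∧ ip w (∑ i, tens (e i) ((α i : ℂ) • f i)) =
      √(∑ i ∈ Finset.univ.filter (fun i : Fin N => (i : ℕ) < k), α i ^ 2) := by
  set S := Finset.univ.filter (fun i : Fin N => (i : ℕ) < k)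
  set r := √(∑ i ∈ S, α i ^ 2)
  have hr : 0 < r := Real.sqrt_pos.2 hpos
  have hr2 : r ^ 2 = ∑ i ∈ S, α i ^ 2 := Real.sq_sqrt hpos.le
  let c : Fin N → ℝ := fun i => if (i : ℕ) < k then α i / r else 0
  have hcα : ∑ i, c i * α i = r := calc
    _ = ∑ i ∈ S, α i ^ 2 / r := by
      rw [Finset.sum_filter]
      exact Finset.sum_congr rfl fun i _ => by simp only [c]; split_ifs <;> ring
    _ = r := by rw [← Finset.sum_div, ← hr2]; field_simp
  have hcc : ∑ i, c i ^ 2 = 1 := calc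
    _ = ∑ i ∈ S, α i ^ 2 / r ^ 2 := by
      rw [Finset.sum_filter]
      exact Finset.sum_congr rfl fun i _ => by simp only [c]; split_ifs <;> ring
    _ = 1 := by rw [← Finset.sum_div, ← hr2, div_self (by positivity)]
  have hf1 : ∀ i, nrm (f i) = 1 := fun i => by
    rw [nrm_eq_norm]; exact (orthonormal_toLp_of_ip hf).1 i
  refine ⟨∑ i, tens (e i) ((c i : ℂ) • f i), ?_, ?_, ?_⟩
  · refine (pow_eq_one_iff_of_nonneg (nrm_nonneg _) two_ne_zero).1 ?_
    rw [sq_nrm_sum_tens_of_orthonormal he, ← hcc]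
    simp only [nrm_smul, hf1, mul_one, Complex.norm_real, Real.norm_eq_abs, sq_abs]
  · refine SRle_sum_tens_of_support S ?_ e fun i hi => ?_
    · simp [S, Fin.card_filter_val_lt]
    · simp only [S, Finset.mem_filter, Finset.mem_univ, true_and] at hi
      simp [c, hi]
  · rw [ip_sum_tens_of_orthonormal he, ← hcα]
    push_cast
    refine Finset.sum_congr rfl fun i _ => ?_
    rw [ip_smul_left, ip_smul_right, hf, if_pos rfl, Complex.conj_ofReal, mul_one]

end Schmidt

section SNorm

variable {m n k : ℕ} {v : Fin m × Fin n → ℂ}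

lemma snorm_nonneg : 0 ≤ snorm k v :=
  Real.sSup_nonneg (by rintro _ ⟨w, -, -, rfl⟩; exact norm_nonneg _)

lemma snorm_le {r : ℝ} (hr : 0 ≤ r) (h : ∀ w, nrm w = 1 → SRle k w → ‖ip w v‖ ≤ r) :
    snorm k v ≤ r :=
  Real.sSup_le (by rintro _ ⟨w, hw, hwk, rfl⟩; exact h w hw hwk) hr

lemma le_snorm {w : Fin m × Fin n → ℂ} (hw : nrm w = 1) (hwk : SRle k w) :
    ‖ip w v‖ ≤ snorm k v :=
  le_csSup ⟨nrm v, by rintro _ ⟨w, hw, -, rfl⟩; simpa [hw] using norm_ip_le w v⟩ ⟨w, hw, hwk, rfl⟩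

end SNorm

theorem snorm_eq_sqrt_sum_sq_general (m n k : ℕ)
    (v : Fin m × Fin n → ℂ) (α : Fin (min m n) → ℝ)
    (e : Fin (min m n) → Fin m → ℂ) (f : Fin (min m n) → Fin n → ℂ)
    (he : ∀ i j, ip (e i) (e j) = if i = j then 1 else 0)
    (hf : ∀ i j, ip (f i) (f j) = if i = j then 1 else 0)
    (hα0 : ∀ i, 0 ≤ α i) (hmono : Antitone α)
    (hv : v = fun p => ∑ i, (α i : ℂ) * (e i p.1 * f i p.2)) :
    snorm k v =
      Real.sqrt (∑ i ∈ Finset.univ.filter (fun i : Fin (min m n) => (i : ℕ) < k), α i ^ 2) := by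
  have hv' : v = ∑ i, tens (e i) ((α i : ℂ) • f i) := by
    ext p; simp [hv, tens, Finset.sum_apply, mul_left_comm]
  subst hv'
  refine le_antisymm (snorm_le (Real.sqrt_nonneg _) fun w hw hwk => ?_) ?_
  · simpa [hw] using norm_ip_le_of_SRle he hf hα0 hmono hwk
  · rcases (Real.sqrt_nonneg _).eq_or_lt with h0 | hpos
    · exact h0 ▸ snorm_nonneg
    · obtain ⟨w, hw, hwk, hwv⟩ := exists_SRle_ip_eq_sqrt he hf (Real.sqrt_pos.1 hpos)
      have h := le_snorm (v := ∑ i, tens (e i) ((α i : ℂ) • f i)) hw hwk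
      rwa [hwv, Complex.norm_real, Real.norm_of_nonneg hpos.le] at h

/-- For a unit vector `v ∈ ℂ^m ⊗ ℂ^n` with Schmidt decomposition having
coefficients `α_1 ≥ α_2 ≥ ⋯ ≥ 0`, the supremum of `|⟨w|v⟩|` over all unit vectors `w` of
Schmidt rank at most `k` equals the square root of the sum of the squares of the `k` largest
Schmidt coefficients of `v`. -/
theorem snorm_eq_sqrt_sum_sq (m n k : ℕ) (hk1 : 1 ≤ k) (hk : k ≤ min m n)
    (v : Fin m × Fin n → ℂ) (α : Fin (min m n) → ℝ)
    (e : Fin (min m n) → Fin m → ℂ) (f : Fin (min m n) → Fin n → ℂ)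
    (he : ∀ i j, ip (e i) (e j) = if i = j then 1 else 0)
    (hf : ∀ i j, ip (f i) (f j) = if i = j then 1 else 0)
    (hα0 : ∀ i, 0 ≤ α i) (hmono : Antitone α)
    (hv : v = fun p => ∑ i, (α i : ℂ) * (e i p.1 * f i p.2))
    (hunit : nrm v = 1) :
    snorm k v =
      Real.sqrt (∑ i ∈ Finset.univ.filter (fun i : Fin (min m n) => (i : ℕ) < k), α i ^ 2) :=
  snorm_eq_sqrt_sum_sq_general m n k v α e f he hf hα0 hmono hv
end
end

section
/- A linear map Φ : M_m → M_n is completely positive if and only if its Choi matrix C_Φ = Σ_{i,j} |i⟩⟨j| ⊗ Φ(|i⟩⟨j|) is positive semidefinite, if and only if there exist at most mn operators A_k ∈ M_{n,m} such that Φ(X) = Σ_k A_k X A_k† for all X. -/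
open scoped BigOperators ComplexOrder

noncomputable section

/-- The ampliation `id_k ⊗ Φ` of a map `Φ : M_m → M_n`, acting on `M_k ⊗ M_m`. -/
def ampliate (k : ℕ) {m n : ℕ} (Φ : Matrix (Fin m) (Fin m) ℂ → Matrix (Fin n) (Fin n) ℂ)
    (X : Matrix (Fin k × Fin m) (Fin k × Fin m) ℂ) : Matrix (Fin k × Fin n) (Fin k × Fin n) ℂ :=
  Matrix.of fun p q => Φ (Matrix.of fun a b => X (p.1, a) (q.1, b)) p.2 q.2

/-- `Φ` is `k`-positive if `id_k ⊗ Φ` maps positive semidefinite matrices to positive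
semidefinite matrices. -/
def kPositive (k : ℕ) {m n : ℕ} (Φ : Matrix (Fin m) (Fin m) ℂ → Matrix (Fin n) (Fin n) ℂ) :
    Prop :=
  ∀ X : Matrix (Fin k × Fin m) (Fin k × Fin m) ℂ, X.PosSemidef → (ampliate k Φ X).PosSemidef

/-- `Φ` is completely positive if it is `k`-positive for all `k`. -/
def CompletelyPositive {m n : ℕ} (Φ : Matrix (Fin m) (Fin m) ℂ → Matrix (Fin n) (Fin n) ℂ) :
    Prop :=
  ∀ k : ℕ, kPositive k Φ

/-- The Choi matrix `C_Φ = Σ_{i,j} |i⟩⟨j| ⊗ Φ(|i⟩⟨j|)` of `Φ : M_m → M_n`. -/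
def choi {m n : ℕ} (Φ : Matrix (Fin m) (Fin m) ℂ → Matrix (Fin n) (Fin n) ℂ) :
    Matrix (Fin m × Fin n) (Fin m × Fin n) ℂ :=
  Matrix.of fun p q => Φ (Matrix.single p.1 q.1 (1 : ℂ)) p.2 q.2

/-!
The Choi matrix is the image under `id_m ⊗ Φ` of the rank-one projection onto the maximally
entangled vector `Σ_i e_i ⊗ e_i`, so it is positive semidefinite when `Φ` is completely
positive. Conversely, writing `C_Φ = BᴴB` and reading the conjugate of each of the `m·n` rows
of `B` as an `n × m` matrix `A_t` gives `Φ(X) = Σ_t A_t X A_tᴴ`; and a map of this form is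
completely positive because `id_k ⊗ (X ↦ A X Aᴴ)` is conjugation by `1 ⊗ A`.
-/

open Matrix
open scoped Kronecker

section

variable {m n : ℕ}

theorem LinearMap.apply_eq_sum_choi (Φ : Matrix (Fin m) (Fin m) ℂ →ₗ[ℂ] Matrix (Fin n) (Fin n) ℂ)
    (X : Matrix (Fin m) (Fin m) ℂ) (a b : Fin n) :
    Φ X a b = ∑ i, ∑ j, X i j * choi (fun Y => Φ Y) (i, a) (j, b) := by
  have single_eq_smul (i j : Fin m) :
      Matrix.single i j (X i j) = X i j • Matrix.single i j (1 : ℂ) := by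
    rw [smul_single, smul_eq_mul, mul_one]
  conv_lhs => rw [matrix_eq_sum_single X]
  simp only [single_eq_smul, map_sum, map_smul, Matrix.sum_apply, Matrix.smul_apply, smul_eq_mul,
    choi, of_apply]

def maxEntangled (m : ℕ) : Fin m × Fin m → ℂ := fun p => if p.1 = p.2 then 1 else 0

theorem ampliate_vecMulVec_maxEntangled
    (Φ : Matrix (Fin m) (Fin m) ℂ → Matrix (Fin n) (Fin n) ℂ) :
    ampliate m Φ (vecMulVec (maxEntangled m) (star (maxEntangled m))) = choi Φ := by
  ext p q
  simp only [ampliate, choi, of_apply]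
  congr 2
  ext a b
  simp only [vecMulVec_apply, maxEntangled, Pi.star_apply, apply_ite star, star_one,
    star_zero, mul_ite, mul_one, mul_zero]
  split_ifs <;> simp_all

theorem CompletelyPositive.posSemidef_choi
    {Φ : Matrix (Fin m) (Fin m) ℂ → Matrix (Fin n) (Fin n) ℂ} (hΦ : CompletelyPositive Φ) :
    (choi Φ).PosSemidef :=
  ampliate_vecMulVec_maxEntangled Φ ▸ hΦ m _ (posSemidef_vecMulVec_self_star _)

theorem ampliate_sum {ι : Type*} [Fintype ι] (k : ℕ)
    (Φ : ι → Matrix (Fin m) (Fin m) ℂ → Matrix (Fin n) (Fin n) ℂ)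
    (X : Matrix (Fin k × Fin m) (Fin k × Fin m) ℂ) :
    ampliate k (fun Y => ∑ i, Φ i Y) X = ∑ i, ampliate k (Φ i) X := by
  ext p q
  simp [ampliate, Matrix.sum_apply]

theorem ampliate_conj (k : ℕ) (A : Matrix (Fin n) (Fin m) ℂ)
    (X : Matrix (Fin k × Fin m) (Fin k × Fin m) ℂ) :
    ampliate k (fun Y => A * Y * Aᴴ) X =
      ((1 : Matrix (Fin k) (Fin k) ℂ) ⊗ₖ A) * X * ((1 : Matrix (Fin k) (Fin k) ℂ) ⊗ₖ A)ᴴ := by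
  ext p q
  simp [ampliate, mul_apply, one_apply, Fintype.sum_prod_type, apply_ite (starRingEnd ℂ),
    Finset.sum_ite_irrel]

theorem completelyPositive_of_kraus {ι : Type*} [Fintype ι]
    {Φ : Matrix (Fin m) (Fin m) ℂ → Matrix (Fin n) (Fin n) ℂ} (A : ι → Matrix (Fin n) (Fin m) ℂ)
    (hA : ∀ X, Φ X = ∑ i, A i * X * (A i)ᴴ) : CompletelyPositive Φ := by
  intro k X hX
  rw [funext hA, ampliate_sum]
  simp only [ampliate_conj]
  exact posSemidef_sum _ fun i _ => hX.mul_mul_conjTranspose_same _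

theorem exists_kraus_of_posSemidef_choi
    {Φ : Matrix (Fin m) (Fin m) ℂ →ₗ[ℂ] Matrix (Fin n) (Fin n) ℂ}
    (hΦ : (choi (fun X => Φ X)).PosSemidef) :
    ∃ A : Fin m × Fin n → Matrix (Fin n) (Fin m) ℂ, ∀ X, Φ X = ∑ t, A t * X * (A t)ᴴ := by
  obtain ⟨B, hB⟩ : ∃ B, choi (fun X => Φ X) = Bᴴ * B := by
    open scoped MatrixOrder in exact CStarAlgebra.nonneg_iff_eq_star_mul_self.mp hΦ.nonneg
  refine ⟨fun t => of fun a i => star (B t (i, a)), fun X => ?_⟩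
  ext a b
  simp only [Φ.apply_eq_sum_choi, hB, Matrix.sum_apply, mul_apply, conjTranspose_apply, of_apply,
    star_star, Finset.mul_sum, Finset.sum_mul]
  rw [Finset.sum_comm_cycle]
  refine Finset.sum_congr rfl fun t _ => Finset.sum_comm.trans ?_
  exact Finset.sum_congr rfl fun j _ => Finset.sum_congr rfl fun i _ => by ring

end

/-- A linear map `Φ : M_m → M_n` is completely positive iff its Choi matrix
is positive semidefinite, iff there exist at most `m·n` operators `A_k ∈ M_{n,m}` with
`Φ(X) = Σ_k A_k X A_kᴴ` for all `X`. -/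
theorem choi_completely_positive (m n : ℕ)
    (Φ : Matrix (Fin m) (Fin m) ℂ →ₗ[ℂ] Matrix (Fin n) (Fin n) ℂ) :
    (CompletelyPositive (fun X => Φ X) ↔ (choi (fun X => Φ X)).PosSemidef) ∧
    (CompletelyPositive (fun X => Φ X) ↔
      ∃ A : Fin (m * n) → Matrix (Fin n) (Fin m) ℂ,
        ∀ X : Matrix (Fin m) (Fin m) ℂ, Φ X = ∑ k, A k * X * (A k).conjTranspose) := by
  have kraus_of_choi : (choi (fun X => Φ X)).PosSemidef →
      ∃ A : Fin (m * n) → Matrix (Fin n) (Fin m) ℂ, ∀ X, Φ X = ∑ k, A k * X * (A k)ᴴ := by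
    intro h
    obtain ⟨A, hA⟩ := exists_kraus_of_posSemidef_choi h
    exact ⟨A ∘ finProdFinEquiv.symm, fun X => (hA X).trans (finProdFinEquiv.symm.sum_comp _).symm⟩
  have cp_of_kraus : (∃ A : Fin (m * n) → Matrix (Fin n) (Fin m) ℂ,
      ∀ X, Φ X = ∑ k, A k * X * (A k)ᴴ) → CompletelyPositive (fun X => Φ X) :=
    fun ⟨A, hA⟩ => completelyPositive_of_kraus A hA
  exact ⟨⟨CompletelyPositive.posSemidef_choi, cp_of_kraus ∘ kraus_of_choi⟩,
    ⟨kraus_of_choi ∘ CompletelyPositive.posSemidef_choi, cp_of_kraus⟩⟩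
end
end

section
/- The partial transpose of the Werner state ρ_α ∈ M_n ⊗ M_n is k-block positive if and only if α ≤ 1/k. -/
/-!
Up to the positive factor `1 / (n² - αn)`, the quadratic form of `ρ_α^Γ` is
`⟨v|ρ_α^Γ|v⟩ = ‖v‖² - α |∑ᵢ v(i,i)|²`. A vector of Schmidt rank at most `k` can be written as
`∑ⱼ eⱼ ⊗ Bⱼ` with at most `k` orthonormal vectors `eⱼ` (an orthonormal basis of the span of its
first tensor factors), so `‖v‖² = ∑ⱼ ‖Bⱼ‖²` while Cauchy–Schwarz gives
`|∑ᵢ v(i,i)| ≤ ∑ⱼ ‖Bⱼ‖`; hence `|∑ᵢ v(i,i)|² ≤ k ‖v‖²`, with equality for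
`v = k^{-1/2} ∑_{l<k} e_l ⊗ e_l`. So the form is nonnegative on unit vectors of Schmidt rank at
most `k` exactly when `αk ≤ 1`.
-/

open scoped BigOperators

noncomputable section

/-- The swap operator `S(|i⟩⊗|j⟩) = |j⟩⊗|i⟩` on `ℂ^n ⊗ ℂ^n`. -/
def swapMat (n : ℕ) : Matrix (Fin n × Fin n) (Fin n × Fin n) ℂ :=
  Matrix.of fun p q => if p.1 = q.2 ∧ p.2 = q.1 then 1 else 0

/-- The Werner state `ρ_α = (1/(n² − αn))(I − αS) ∈ M_n ⊗ M_n`. -/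
def werner (n : ℕ) (α : ℝ) : Matrix (Fin n × Fin n) (Fin n × Fin n) ℂ :=
  ((1 / ((n : ℝ) ^ 2 - α * n) : ℝ) : ℂ) •
    ((1 : Matrix (Fin n × Fin n) (Fin n × Fin n) ℂ) - (α : ℂ) • swapMat n)

/-- The partial transpose (on the second tensor factor):
`X^Γ((i,j),(i',j')) = X((i,j'),(i',j))`. -/
def ptranspose {m n : ℕ} (X : Matrix (Fin m × Fin n) (Fin m × Fin n) ℂ) :
    Matrix (Fin m × Fin n) (Fin m × Fin n) ℂ :=
  Matrix.of fun p q => X (p.1, q.2) (q.1, p.2)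


open Matrix

/-- `√n ψ₊`, so that `vecMulVec (maxEntVec n) (maxEntVec n) = n |ψ₊⟩⟨ψ₊|`. -/
def maxEntVec (n : ℕ) : Fin n × Fin n → ℂ := fun p => if p.1 = p.2 then 1 else 0

lemma maxEntVec_dotProduct {n : ℕ} (v : Fin n × Fin n → ℂ) :
    maxEntVec n ⬝ᵥ v = ∑ i, v (i, i) := by
  simp [maxEntVec, dotProduct, Fintype.sum_prod_type, ite_mul]

lemma ptranspose_werner (n : ℕ) (α : ℝ) :
    ptranspose (werner n α) = ((1 / ((n : ℝ) ^ 2 - α * n) : ℝ) : ℂ) •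
      (1 - (α : ℂ) • vecMulVec (maxEntVec n) (maxEntVec n)) := by
  ext ⟨i, j⟩ ⟨i', j'⟩
  simp only [ptranspose, werner, swapMat, maxEntVec, of_apply, Matrix.smul_apply,
    Matrix.sub_apply, one_apply, vecMulVec_apply, Prod.mk.injEq]
  by_cases h : i = i' <;> by_cases h' : j' = j <;> by_cases h'' : i = j <;> simp_all [eq_comm]

lemma ip_eq_star_dotProduct {ι : Type} [Fintype ι] (w v : ι → ℂ) : ip w v = star w ⬝ᵥ v := rfl

lemma nrm_eq_one_iff {ι : Type} [Fintype ι] (v : ι → ℂ) : nrm v = 1 ↔ ∑ i, ‖v i‖ ^ 2 = 1 := by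
  simp [nrm, Complex.normSq_eq_norm_sq]

lemma re_ip_ptranspose_werner_mulVec (n : ℕ) (α : ℝ) (v : Fin n × Fin n → ℂ) :
    (ip v (ptranspose (werner n α) *ᵥ v)).re =
      1 / ((n : ℝ) ^ 2 - α * n) * (∑ p, ‖v p‖ ^ 2 - α * ‖∑ i, v (i, i)‖ ^ 2) := by
  have hself : star v ⬝ᵥ v = ((∑ p, ‖v p‖ ^ 2 : ℝ) : ℂ) := by
    simp [dotProduct, Complex.conj_mul']
  have hdiag : star v ⬝ᵥ maxEntVec n = (starRingEnd ℂ) (∑ i, v (i, i)) := by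
    rw [dotProduct_comm, maxEntVec_dotProduct, map_sum]
    rfl
  have hip : ip v (ptranspose (werner n α) *ᵥ v) = ((1 / ((n : ℝ) ^ 2 - α * n) *
      (∑ p, ‖v p‖ ^ 2 - α * ‖∑ i, v (i, i)‖ ^ 2) : ℝ) : ℂ) := by
    rw [ip_eq_star_dotProduct, ptranspose_werner, smul_mulVec, sub_mulVec, one_mulVec,
      smul_mulVec, vecMulVec_mulVec, maxEntVec_dotProduct]
    simp only [dotProduct_smul, dotProduct_sub, hself, hdiag, smul_eq_mul,
      MulOpposite.smul_eq_mul_unop, MulOpposite.unop_op, Complex.conj_mul']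
    push_cast
    ring
  rw [hip, Complex.ofReal_re]

lemma kBlockPos_ptranspose_werner_iff {n k : ℕ} {α : ℝ} (hn : 0 < n) (hα : α < n) :
    kBlockPos k (ptranspose (werner n α)) ↔
      ∀ v : Fin n × Fin n → ℂ, nrm v = 1 → SRle k v → α * ‖∑ i, v (i, i)‖ ^ 2 ≤ 1 := by
  have hc : 0 < 1 / ((n : ℝ) ^ 2 - α * n) := by
    have hn' : (0 : ℝ) < n := by exact_mod_cast hn
    exact one_div_pos.2 (by nlinarith)
  refine forall_congr' fun v => imp_congr_right fun hv => imp_congr_right fun _ => ?_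
  rw [re_ip_ptranspose_werner_mulVec, (nrm_eq_one_iff v).1 hv, mul_nonneg_iff_of_pos_left hc,
    sub_nonneg]

lemma Orthonormal.norm_sum_smul_sq {ι E : Type*} [Fintype ι] [NormedAddCommGroup E]
    [InnerProductSpace ℂ E] {e : ι → E} (he : Orthonormal ℂ e) (c : ι → ℂ) :
    ‖∑ j, c j • e j‖ ^ 2 = ∑ j, ‖c j‖ ^ 2 := by
  rw [@norm_sq_eq_re_inner ℂ, he.inner_sum]
  simp [Complex.conj_mul', ← Complex.ofReal_pow]

lemma EuclideanSpace.norm_sum_mul_le {ι : Type*} [Fintype ι] (x y : EuclideanSpace ℂ ι) :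
    ‖∑ i, x i * y i‖ ≤ ‖x‖ * ‖y‖ :=
  calc ‖∑ i, x i * y i‖ ≤ ∑ i, ‖x i‖ * ‖y i‖ := (norm_sum_le _ _).trans_eq (by simp)
    _ ≤ √(∑ i, ‖x i‖ ^ 2) * √(∑ i, ‖y i‖ ^ 2) := Real.sum_mul_le_sqrt_mul_sqrt _ _ _
    _ = ‖x‖ * ‖y‖ := by rw [EuclideanSpace.norm_eq, EuclideanSpace.norm_eq]

section schmidtSum

variable {ι : Type*} [Fintype ι] {m n : ℕ}

def schmidtSum (e : ι → EuclideanSpace ℂ (Fin m)) (B : ι → EuclideanSpace ℂ (Fin n)) :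
    Fin m × Fin n → ℂ :=
  fun p => ∑ j, e j p.1 * B j p.2

lemma SRle_schmidtSum {k : ℕ} (e : Fin k → EuclideanSpace ℂ (Fin m))
    (B : Fin k → EuclideanSpace ℂ (Fin n)) : SRle k (schmidtSum e B) :=
  ⟨fun j => e j, fun j => B j, rfl⟩

lemma sum_norm_schmidtSum_sq {e : ι → EuclideanSpace ℂ (Fin m)} (he : Orthonormal ℂ e)
    (B : ι → EuclideanSpace ℂ (Fin n)) :
    ∑ p, ‖schmidtSum e B p‖ ^ 2 = ∑ j, ‖B j‖ ^ 2 := by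
  have hcol : ∀ i : Fin n, ∑ i' : Fin m, ‖∑ j, e j i' * B j i‖ ^ 2 = ∑ j, ‖B j i‖ ^ 2 := by
    intro i
    rw [← he.norm_sum_smul_sq, EuclideanSpace.norm_sq_eq]
    simp [mul_comm]
  simp_rw [schmidtSum, Fintype.sum_prod_type, EuclideanSpace.norm_sq_eq]
  rw [Finset.sum_comm, Finset.sum_congr rfl fun i _ => hcol i, Finset.sum_comm]

lemma norm_sum_diag_schmidtSum_sq_le {e : ι → EuclideanSpace ℂ (Fin n)} (he : Orthonormal ℂ e)
    (B : ι → EuclideanSpace ℂ (Fin n)) :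
    ‖∑ i, schmidtSum e B (i, i)‖ ^ 2 ≤ Fintype.card ι * ∑ j, ‖B j‖ ^ 2 :=
  calc ‖∑ i, schmidtSum e B (i, i)‖ ^ 2 = ‖∑ j, ∑ i, e j i * B j i‖ ^ 2 := by
        simp only [schmidtSum]
        rw [Finset.sum_comm]
    _ ≤ (∑ j, ‖B j‖) ^ 2 := by
      gcongr
      refine (norm_sum_le _ _).trans (Finset.sum_le_sum fun j _ => ?_)
      simpa [he.1 j] using EuclideanSpace.norm_sum_mul_le (e j) (B j)
    _ ≤ Fintype.card ι * ∑ j, ‖B j‖ ^ 2 := sq_sum_le_card_mul_sum_sq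

end schmidtSum

lemma SRle.exists_orthonormal_schmidtSum {m n k : ℕ} {v : Fin m × Fin n → ℂ} (hv : SRle k v) :
    ∃ (r : ℕ) (e : Fin r → EuclideanSpace ℂ (Fin m)) (B : Fin r → EuclideanSpace ℂ (Fin n)),
      r ≤ k ∧ Orthonormal ℂ e ∧ v = schmidtSum e B := by
  obtain ⟨a, b, rfl⟩ := hv
  let W := Submodule.span ℂ (Set.range fun l => WithLp.toLp 2 (a l))
  let ob := stdOrthonormalBasis ℂ W
  let e : Fin (Module.finrank ℂ W) → EuclideanSpace ℂ (Fin m) := fun j => ob j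
  have hexp : ∀ l i, a l i = ∑ j, inner ℂ (e j) (WithLp.toLp 2 (a l)) * e j i := by
    intro l i
    have := congrArg (fun x : W => (x : EuclideanSpace ℂ (Fin m)) i)
      (ob.sum_repr' ⟨_, Submodule.subset_span ⟨l, rfl⟩⟩)
    simpa using this.symm
  refine ⟨Module.finrank ℂ W, e,
    fun j => WithLp.toLp 2 fun i => ∑ l, inner ℂ (e j) (WithLp.toLp 2 (a l)) * b l i,
    (finrank_range_le_card _).trans_eq (Fintype.card_fin k),
    ob.orthonormal.comp_linearIsometry W.subtypeₗᵢ, ?_⟩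
  ext p
  simp only [schmidtSum, hexp, Finset.sum_mul, Finset.mul_sum]
  rw [Finset.sum_comm]
  simp [mul_comm, mul_left_comm]

lemma SRle.norm_sum_diag_sq_le {n k : ℕ} {v : Fin n × Fin n → ℂ} (hv : SRle k v) :
    ‖∑ i, v (i, i)‖ ^ 2 ≤ k * ∑ p, ‖v p‖ ^ 2 := by
  obtain ⟨r, e, B, hrk, he, rfl⟩ := hv.exists_orthonormal_schmidtSum
  rw [sum_norm_schmidtSum_sq he]
  calc _ ≤ Fintype.card (Fin r) * ∑ j, ‖B j‖ ^ 2 := norm_sum_diag_schmidtSum_sq_le he B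
    _ ≤ k * ∑ j, ‖B j‖ ^ 2 := by
      rw [Fintype.card_fin]
      gcongr

lemma exists_unit_SRle_norm_sum_diag_sq_eq {n k : ℕ} (hk : k ≠ 0) (hkn : k ≤ n) :
    ∃ w : Fin n × Fin n → ℂ, SRle k w ∧ ∑ p, ‖w p‖ ^ 2 = 1 ∧ ‖∑ i, w (i, i)‖ ^ 2 = k := by
  let e : Fin k → EuclideanSpace ℂ (Fin n) := fun l => EuclideanSpace.single (Fin.castLE hkn l) 1
  have he : Orthonormal ℂ e :=
    EuclideanSpace.orthonormal_single.comp _ (Fin.castLE_injective hkn)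
  let c : ℂ := ((√k)⁻¹ : ℝ)
  have hk0 : (0 : ℝ) < k := by positivity
  refine ⟨schmidtSum e (fun l => c • e l), SRle_schmidtSum _ _, ?_, ?_⟩
  · rw [sum_norm_schmidtSum_sq he]
    simp [c, norm_smul, he.1, inv_pow, Real.sq_sqrt hk0.le, hk]
  · simp [schmidtSum, c, e, Finset.sum_comm (γ := Fin n)]
    rw [abs_of_nonneg (Real.sqrt_nonneg _), mul_pow, inv_pow, Real.sq_sqrt hk0.le]
    field_simp

theorem werner_ptranspose_kBlockPos_iff_general (n k : ℕ) (hn : 2 ≤ n) (hk1 : 1 ≤ k) (hkn : k ≤ n)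
    (α : ℝ) (hα2 : α ≤ 1) :
    kBlockPos k (ptranspose (werner n α)) ↔ α ≤ 1 / (k : ℝ) := by
  have hk0 : (0 : ℝ) < k := by exact_mod_cast hk1
  have hαn : α < n := by
    have : (2 : ℝ) ≤ n := by exact_mod_cast hn
    linarith
  rw [kBlockPos_ptranspose_werner_iff (by omega) hαn, le_div_iff₀ hk0]
  constructor
  · intro h
    obtain ⟨w, hw, hw1, hwk⟩ := exists_unit_SRle_norm_sum_diag_sq_eq (by omega) hkn
    simpa [hwk] using h w ((nrm_eq_one_iff w).2 hw1) hw
  · intro hαk v hv hvk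
    have hbound := hvk.norm_sum_diag_sq_le
    rw [(nrm_eq_one_iff v).1 hv, mul_one] at hbound
    rcases le_total α 0 with hα | hα
    · nlinarith [sq_nonneg ‖∑ i, v (i, i)‖]
    · nlinarith

/-- The partial transpose of the Werner state `ρ_α ∈ M_n ⊗ M_n` is
`k`-block positive if and only if `α ≤ 1/k`. -/
theorem werner_ptranspose_kBlockPos_iff (n k : ℕ) (hn : 2 ≤ n) (hk1 : 1 ≤ k) (hkn : k ≤ n)
    (α : ℝ) (hα1 : -1 ≤ α) (hα2 : α ≤ 1) :
    kBlockPos k (ptranspose (werner n α)) ↔ α ≤ 1 / (k : ℝ) :=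
  werner_ptranspose_kBlockPos_iff_general n k hn hk1 hkn α hα2
end
end

section
/- Let a = a_1 ⊗ a_2 ⊗ ... ⊗ a_p and b = b_1 ⊗ b_2 ⊗ ... ⊗ b_p be nonzero elementary tensors in C^{n_1} ⊗ ... ⊗ C^{n_p}. Then a + b is an elementary tensor (i.e., a product vector) if and only if a_i and b_i are linearly dependent for all indices i with at most one exception. -/
/-!
Tensors in `K^{κ₁} ⊗ ⋯ ⊗ K^{κₚ}` are functions on `∀ i, κ i`. Pairing `⊗a + ⊗b = ⊗c` with
product functionals `φ` in every slot but `k` gives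
`(∏_{i ≠ k} φᵢ aᵢ) • aₖ + (∏_{i ≠ k} φᵢ bᵢ) • bₖ = (∏_{i ≠ k} φᵢ cᵢ) • cₖ`.
If `aₗ, bₗ` are independent for some `l ≠ k`, a functional in slot `l` that kills `bₗ` but not
`aₗ` gives `aₖ ∈ K ∙ cₖ`, and symmetrically `bₖ ∈ K ∙ cₖ`, so `aₖ, bₖ` are dependent.
Conversely, if `bᵢ = γᵢ • aᵢ` for all `i ≠ j`, multilinearity gives
`⊗a + ⊗b = a₁ ⊗ ⋯ ⊗ (aⱼ + (∏ γᵢ) • bⱼ) ⊗ ⋯ ⊗ aₚ`.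
-/

open Submodule Finset Function

theorem mem_span_singleton_symm {K V : Type*} [Field K] [AddCommGroup V]
    [Module K V] {x y : V} (h : x ∈ K ∙ y) (hx : x ≠ 0) : y ∈ K ∙ x := by
  obtain ⟨γ, rfl⟩ := mem_span_singleton.1 h
  rw [span_singleton_smul_eq (IsUnit.mk0 γ (left_ne_zero_of_smul hx))]
  exact mem_span_singleton_self y

theorem exists_dotProduct_ne_zero_and_eq_zero {K ι : Type*} [Field K] [Fintype ι]
    [DecidableEq ι] {a b : ι → K} (h : a ∉ K ∙ b) :
    ∃ φ : ι → K, φ ⬝ᵥ a ≠ 0 ∧ φ ⬝ᵥ b = 0 := by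
  obtain ⟨f, hfa, hfb⟩ := exists_le_ker_of_notMem h
  refine ⟨(dotProductEquiv K ι).symm f, ?_, ?_⟩
  · simpa [← dotProductEquiv_apply_apply, LinearEquiv.apply_symm_apply] using hfa
  · simpa [← dotProductEquiv_apply_apply] using hfb (mem_span_singleton_self b)

section ElementaryTensor

variable {K ι : Type*} [CommSemiring K] [Fintype ι] {κ : ι → Type*}

variable (K κ) in
def elementaryTensor : MultilinearMap K (fun i => κ i → K) ((∀ i, κ i) → K) :=
  MultilinearMap.piFamily fun _ => MultilinearMap.mkPiAlgebra K ι K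

@[simp]
theorem elementaryTensor_apply (v : ∀ i, κ i → K) (x : ∀ i, κ i) :
    elementaryTensor K κ v x = ∏ i, v i (x i) := by
  simp [elementaryTensor, MultilinearMap.mkPiAlgebra_apply]

variable [DecidableEq ι] [∀ i, Fintype (κ i)]

theorem elementaryTensor_dotProduct_elementaryTensor (φ v : ∀ i, κ i → K) :
    elementaryTensor K κ φ ⬝ᵥ elementaryTensor K κ v = ∏ i, φ i ⬝ᵥ v i := by
  simp only [dotProduct, elementaryTensor_apply, prod_univ_sum, ← prod_mul_distrib]
  rfl

theorem prod_update_dotProduct (φ v : ∀ i, κ i → K) (k : ι) (ψ : κ k → K) :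
    ∏ i, update φ k ψ i ⬝ᵥ v i = ψ ⬝ᵥ v k * ∏ i ∈ univ.erase k, φ i ⬝ᵥ v i := by
  rw [← mul_prod_erase univ _ (mem_univ k), update_self]
  congr 1
  exact prod_congr rfl fun i hi => by rw [update_of_ne (ne_of_mem_erase hi)]

variable [∀ i, DecidableEq (κ i)] {a b c : ∀ i, κ i → K}

theorem smul_add_smul_eq_smul_of_elementaryTensor_add_eq
    (h : elementaryTensor K κ a + elementaryTensor K κ b = elementaryTensor K κ c)
    (k : ι) (φ : ∀ i, κ i → K) :
    (∏ i ∈ univ.erase k, φ i ⬝ᵥ a i) • a k + (∏ i ∈ univ.erase k, φ i ⬝ᵥ b i) • b k =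
      (∏ i ∈ univ.erase k, φ i ⬝ᵥ c i) • c k := by
  ext u
  have := congrArg (elementaryTensor K κ (update φ k (Pi.single u 1)) ⬝ᵥ ·) h
  simp only [dotProduct_add, elementaryTensor_dotProduct_elementaryTensor,
    prod_update_dotProduct, single_dotProduct, one_mul] at this
  simpa [mul_comm] using this

end ElementaryTensor

section Forward

variable {K ι : Type*} [Field K] [Fintype ι] [DecidableEq ι] {κ : ι → Type*}
  [∀ i, Fintype (κ i)] [∀ i, DecidableEq (κ i)] {a b c : ∀ i, κ i → K}

theorem mem_span_singleton_right_of_elementaryTensor_add_eq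
    (h : elementaryTensor K κ a + elementaryTensor K κ b = elementaryTensor K κ c)
    (ha : ∀ i, a i ≠ 0) {k l : ι} (hkl : k ≠ l) (hl : a l ∉ K ∙ b l) : a k ∈ K ∙ c k := by
  have hφ : ∀ i, ∃ φ : κ i → K, φ ⬝ᵥ a i ≠ 0 ∧ (i = l → φ ⬝ᵥ b i = 0) := by
    intro i
    by_cases hi : i = l
    · subst hi
      obtain ⟨φ, hφa, hφb⟩ := exists_dotProduct_ne_zero_and_eq_zero hl
      exact ⟨φ, hφa, fun _ => hφb⟩
    · obtain ⟨φ, hφa, -⟩ := exists_dotProduct_ne_zero_and_eq_zero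
        (a := a i) (b := 0) (by simpa using ha i)
      exact ⟨φ, hφa, fun h => absurd h hi⟩
  choose φ hφa hφb using hφ
  have hA : ∏ i ∈ univ.erase k, φ i ⬝ᵥ a i ≠ 0 := prod_ne_zero_iff.2 fun i _ => hφa i
  have hB : ∏ i ∈ univ.erase k, φ i ⬝ᵥ b i = 0 :=
    prod_eq_zero (mem_erase.2 ⟨hkl.symm, mem_univ l⟩) (hφb l rfl)
  have hslice := smul_add_smul_eq_smul_of_elementaryTensor_add_eq h k φ
  rw [hB, zero_smul, add_zero] at hslice
  rw [← inv_smul_smul₀ hA (a k), hslice]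
  exact smul_mem _ _ (smul_mem _ _ (mem_span_singleton_self _))

theorem mem_span_singleton_of_elementaryTensor_add_eq
    (h : elementaryTensor K κ a + elementaryTensor K κ b = elementaryTensor K κ c)
    (ha : ∀ i, a i ≠ 0) (hb : ∀ i, b i ≠ 0) {k l : ι} (hkl : k ≠ l) (hl : b l ∉ K ∙ a l) :
    b k ∈ K ∙ a k := by
  have hl' : a l ∉ K ∙ b l := fun h' => hl (mem_span_singleton_symm h' (ha l))
  have hac := mem_span_singleton_right_of_elementaryTensor_add_eq h ha hkl hl'
  have hbc := mem_span_singleton_right_of_elementaryTensor_add_eq ((add_comm _ _).trans h) hb hkl hl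
  exact mem_span_singleton_trans hbc (mem_span_singleton_symm hac (ha k))

end Forward

section Backward

variable {K ι : Type*} [CommSemiring K] [Fintype ι] [DecidableEq ι] {κ : ι → Type*}
  {a b : ∀ i, κ i → K}

theorem exists_elementaryTensor_eq_add_of_mem_span_singleton (j : ι)
    (h : ∀ i ≠ j, b i ∈ K ∙ a i) :
    ∃ c, elementaryTensor K κ a + elementaryTensor K κ b = elementaryTensor K κ c := by
  have hγ : ∀ i, ∃ γ : K, γ • update a j (b j) i = b i := by
    intro i
    by_cases hi : i = j
    · subst hi
      exact ⟨1, by simp⟩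
    · simpa [hi, mem_span_singleton] using h i hi
  choose γ hγ using hγ
  have hb : elementaryTensor K κ b = (∏ i, γ i) • elementaryTensor K κ (update a j (b j)) := by
    rw [← MultilinearMap.map_smul_univ]
    exact congrArg _ (funext hγ).symm
  refine ⟨update a j (a j + (∏ i, γ i) • b j), ?_⟩
  rw [hb, MultilinearMap.map_update_add, MultilinearMap.map_update_smul, update_eq_self]

end Backward

/-- Let `a = a₁ ⊗ ⋯ ⊗ a_p` and `b = b₁ ⊗ ⋯ ⊗ b_p` be nonzero elementary
tensors in `ℂ^{n₁} ⊗ ⋯ ⊗ ℂ^{n_p}`.  Then `a + b` is an elementary tensor (a product vector)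
if and only if `a_i` and `b_i` are linearly dependent for all indices `i` with at most one
exception. -/
theorem sum_of_elementary_tensors_is_elementary_iff (p : ℕ) (hp : 0 < p) (n : Fin p → ℕ)
    (a b : ∀ i, Fin (n i) → ℂ) (ha : ∀ i, a i ≠ 0) (hb : ∀ i, b i ≠ 0) :
    (∃ c : ∀ i, Fin (n i) → ℂ,
        (fun x : ∀ i, Fin (n i) => (∏ i, a i (x i)) + ∏ i, b i (x i)) =
          fun x => ∏ i, c i (x i)) ↔
      ∃ j : Fin p, ∀ i, i ≠ j → ∃ γ : ℂ, b i = γ • a i := by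
  have tensor_eq_iff (c : ∀ i, Fin (n i) → ℂ) :
      elementaryTensor ℂ _ a + elementaryTensor ℂ _ b = elementaryTensor ℂ _ c ↔
        (fun x : ∀ i, Fin (n i) => (∏ i, a i (x i)) + ∏ i, b i (x i)) =
          fun x => ∏ i, c i (x i) := by
    simp only [funext_iff, Pi.add_apply, elementaryTensor_apply]
  have mem_iff (i : Fin p) : b i ∈ ℂ ∙ a i ↔ ∃ γ : ℂ, b i = γ • a i := by
    simp only [mem_span_singleton, eq_comm]
  simp only [← tensor_eq_iff, ← mem_iff]
  constructor
  · rintro ⟨c, hc⟩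
    by_cases hdep : ∀ i, b i ∈ ℂ ∙ a i
    · exact ⟨⟨0, hp⟩, fun i _ => hdep i⟩
    · obtain ⟨l, hl⟩ := not_forall.1 hdep
      exact ⟨l, fun k hk => mem_span_singleton_of_elementaryTensor_add_eq hc ha hb hk hl⟩
  · rintro ⟨j, hj⟩
    exact exists_elementaryTensor_eq_add_of_mem_span_singleton j hj
end

section
/- Let p ≥ 3 and suppose X_1, ..., X_p ∈ M_{n,m} are rank-one matrices such that X_i + X_j has rank at most one for all i ≠ j. Then X_1 + X_2 + ... + X_p has rank at most one. -/
/-!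
Write `X i = a i ⬝ (b i)ᵀ` with `a i, b i ≠ 0`. By Cauchy–Binet, a `2 × 2` minor of
`a bᵀ + c dᵀ` is the product of the corresponding minors of the pairs `(a, c)` and `(b, d)`,
so `X i + X j` has rank at most one only if `a i ∥ a j` or `b i ∥ b j`, i.e. the points `[a i]`,
`[a j]` or the points `[b i]`, `[b j]` of projective space coincide. If two points `[a i] ≠ [a j]`
exist, every `[b k]` equals `[b i] = [b j]`; so all `[a i]` or all `[b i]` agree, and the sum
is again a single outer product.
-/

open Matrix

theorem Pairwise.forall_eq_or_forall_eq {ι α β : Type*} {f : ι → α} {g : ι → β}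
    (h : Pairwise fun i j => f i = f j ∨ g i = g j) :
    (∀ i j, f i = f j) ∨ ∀ i j, g i = g j := by
  by_cases hf : ∀ i j, f i = f j
  · exact Or.inl hf
  push Not at hf
  obtain ⟨i, j, hfij⟩ := hf
  have hgij : g i = g j := (h (ne_of_apply_ne f hfij)).resolve_left hfij
  have hg : ∀ k, g k = g i := by
    intro k
    by_cases hki : f k = f i
    · have hfkj : f k ≠ f j := hki ▸ hfij
      rw [hgij]
      exact (h (ne_of_apply_ne f hfkj)).resolve_left hfkj
    · exact (h (ne_of_apply_ne f hki)).resolve_left hki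
  exact Or.inr fun k l => by rw [hg k, hg l]

theorem Projectivization.mk_eq_mk_iff_mul_eq_mul {K ι : Type*} [Field K] {v w : ι → K}
    (hv : v ≠ 0) (hw : w ≠ 0) :
    mk K v hv = mk K w hw ↔ ∀ i j, v i * w j = v j * w i := by
  rw [mk_eq_mk_iff']
  constructor
  · rintro ⟨t, rfl⟩ i j
    simp only [Pi.smul_apply, smul_eq_mul]
    ring
  · intro h
    obtain ⟨j, hj⟩ : ∃ j, w j ≠ 0 := Function.ne_iff.mp hw
    refine ⟨v j / w j, funext fun i => ?_⟩
    simp only [Pi.smul_apply, smul_eq_mul]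
    field_simp
    linear_combination h j i

namespace Matrix

variable {K m n : Type*} [Field K] [Fintype n]

section

variable [Fintype m]

theorem exists_eq_vecMulVec_of_rank_le_one {A : Matrix m n K} (h : A.rank ≤ 1) :
    ∃ (w : m → K) (v : n → K), A = vecMulVec w v := by
  rw [rank_eq_finrank_span_cols] at h
  obtain ⟨w, hw⟩ := (Submodule.finrank_le_one_iff_isPrincipal _).mp h
  have hcol : ∀ j, ∃ c : K, c • w = Aᵀ j := fun j =>
    Submodule.mem_span_singleton.mp (hw ▸ Submodule.subset_span ⟨j, rfl⟩)
  choose v hv using hcol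
  refine ⟨w, v, ext fun i j => ?_⟩
  rw [vecMulVec_apply, ← transpose_apply A j i, ← hv j, Pi.smul_apply, smul_eq_mul, mul_comm]

theorem exists_eq_vecMulVec_of_rank_eq_one {A : Matrix m n K} (h : A.rank = 1) :
    ∃ (w : m → K) (v : n → K), w ≠ 0 ∧ v ≠ 0 ∧ A = vecMulVec w v := by
  obtain ⟨w, v, rfl⟩ := exists_eq_vecMulVec_of_rank_le_one h.le
  have hA : vecMulVec w v ≠ 0 := by
    rintro h0
    rw [h0, rank_zero] at h
    exact zero_ne_one h
  refine ⟨w, v, ?_, ?_, rfl⟩ <;> rintro rfl <;> exact hA (ext fun _ _ => by simp [vecMulVec_apply])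

theorem mul_eq_mul_of_rank_le_one {A : Matrix m n K} (h : A.rank ≤ 1) (i i' : m) (j j' : n) :
    A i j * A i' j' = A i j' * A i' j := by
  obtain ⟨w, v, rfl⟩ := exists_eq_vecMulVec_of_rank_le_one h
  simp only [vecMulVec_apply]
  ring

theorem mk_eq_or_mk_eq_of_rank_add_vecMulVec_le_one {a c : m → K} {b d : n → K}
    (ha : a ≠ 0) (hb : b ≠ 0) (hc : c ≠ 0) (hd : d ≠ 0)
    (h : (vecMulVec a b + vecMulVec c d).rank ≤ 1) :
    Projectivization.mk K a ha = .mk K c hc ∨ Projectivization.mk K b hb = .mk K d hd := by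
  simp only [Projectivization.mk_eq_mk_iff_mul_eq_mul]
  by_contra! ⟨⟨i, i', hi⟩, ⟨j, j', hj⟩⟩
  have hminor := mul_eq_mul_of_rank_le_one h i i' j j'
  simp only [add_apply, vecMulVec_apply] at hminor
  have : (a i * c i' - a i' * c i) * (b j * d j' - b j' * d j) = 0 := by
    linear_combination hminor
  exact mul_ne_zero (sub_ne_zero.mpr hi) (sub_ne_zero.mpr hj) this

end

variable {ι : Type*} [Fintype ι]

theorem rank_sum_vecMulVec_le_one_of_forall_mk_right_eq {a : ι → m → K} {b : ι → n → K}
    (hb : ∀ i, b i ≠ 0)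
    (h : ∀ i j, Projectivization.mk K (b i) (hb i) = .mk K (b j) (hb j)) :
    (∑ i, vecMulVec (a i) (b i)).rank ≤ 1 := by
  cases isEmpty_or_nonempty ι with
  | inl _ => simp
  | inr hι =>
    obtain ⟨i₀⟩ := hι
    choose t ht using fun i => (Projectivization.mk_eq_mk_iff' K _ _ (hb i) (hb i₀)).mp (h i i₀)
    have hsum : ∑ i, vecMulVec (a i) (b i) = vecMulVec (∑ i, t i • a i) (b i₀) :=
      calc _ = ∑ i, vecMulVec (t i • a i) (b i₀) := by
            refine Finset.sum_congr rfl fun i _ => ?_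
            rw [← ht i, vecMulVec_smul, smul_vecMulVec]
        _ = _ := by
            ext r s
            simp [vecMulVec_apply, sum_apply, Finset.sum_mul, mul_assoc]
    exact hsum ▸ rank_vecMulVec_le _ _

theorem rank_sum_vecMulVec_le_one_of_forall_mk_left_eq [Fintype m]
    {a : ι → m → K} {b : ι → n → K} (ha : ∀ i, a i ≠ 0)
    (h : ∀ i j, Projectivization.mk K (a i) (ha i) = .mk K (a j) (ha j)) :
    (∑ i, vecMulVec (a i) (b i)).rank ≤ 1 := by
  rw [← rank_transpose, transpose_sum]
  simp only [transpose_vecMulVec]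
  exact rank_sum_vecMulVec_le_one_of_forall_mk_right_eq ha h

end Matrix

theorem rank_one_sum_general (p : ℕ) (n m : ℕ)
    (X : Fin p → Matrix (Fin n) (Fin m) ℂ)
    (hrank : ∀ i, (X i).rank = 1)
    (hpair : ∀ i j, i ≠ j → (X i + X j).rank ≤ 1) :
    (∑ i, X i).rank ≤ 1 := by
  choose a b ha hb hX using fun i => exists_eq_vecMulVec_of_rank_eq_one (hrank i)
  obtain rfl : X = fun i => vecMulVec (a i) (b i) := funext hX
  have hpoints : Pairwise fun i j =>
      Projectivization.mk ℂ (a i) (ha i) = .mk ℂ (a j) (ha j) ∨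
        Projectivization.mk ℂ (b i) (hb i) = .mk ℂ (b j) (hb j) := fun i j hij =>
    mk_eq_or_mk_eq_of_rank_add_vecMulVec_le_one (ha i) (hb i) (ha j) (hb j) (hpair i j hij)
  rcases hpoints.forall_eq_or_forall_eq with hA | hB
  · exact rank_sum_vecMulVec_le_one_of_forall_mk_left_eq ha hA
  · exact rank_sum_vecMulVec_le_one_of_forall_mk_right_eq hb hB

/-- Let `p ≥ 3` and suppose `X₁, …, X_p ∈ M_{n,m}` are rank-one matrices
such that `X_i + X_j` has rank at most one for all `i ≠ j`.  Then `X₁ + ⋯ + X_p` has rank at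
most one. -/
theorem rank_one_sum (p : ℕ) (hp : 3 ≤ p) (n m : ℕ)
    (X : Fin p → Matrix (Fin n) (Fin m) ℂ)
    (hrank : ∀ i, (X i).rank = 1)
    (hpair : ∀ i j, i ≠ j → (X i + X j).rank ≤ 1) :
    (∑ i, X i).rank ≤ 1 :=
  rank_one_sum_general p n m X hrank hpair
end

section
/- Let U ∈ M_m ⊗ M_n be a linear operator such that ‖U v‖ = ‖v‖ for all separable (product) vectors v ∈ C^m ⊗ C^n. Then U is unitary. -/
open scoped BigOperators

noncomputable section

/-!
Put `X = Uᴴ U - 1`. Norm preservation on product vectors says exactly that the quadratic form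
`v ↦ ⟨v|X|v⟩` vanishes on every `a ⊗ b`. For fixed `b`, the form `a ↦ ⟨a ⊗ b|X|a ⊗ b⟩` is the
quadratic form of the `α × α` matrix of partial expectations `⟨b|X_{i i'}|b⟩`, so by complex
polarization this matrix vanishes; polarizing once more in `b` kills every block `X_{i i'}`.
-/

open Matrix

theorem Matrix.eq_zero_of_forall_star_dotProduct_mulVec_self {ι : Type*} [Fintype ι]
    [DecidableEq ι] {M : Matrix ι ι ℂ} (h : ∀ x : ι → ℂ, star x ⬝ᵥ M *ᵥ x = 0) : M = 0 := by
  -- In `EuclideanSpace`, `⟪Mᴴ x, x⟫ = star x ⬝ᵥ M *ᵥ x`.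
  have hT : toLpLin 2 2 Mᴴ = 0 := by
    refine (inner_map_self_eq_zero _).mp fun x => ?_
    rw [EuclideanSpace.inner_eq_star_dotProduct, toLpLin_apply, ← dotProduct_comm,
      star_mulVec, conjTranspose_conjTranspose, ← dotProduct_mulVec, h]
  rwa [LinearEquiv.map_eq_zero_iff, conjTranspose_eq_zero] at hT

theorem Matrix.star_dotProduct_mulVec_prod {α β : Type*} [Fintype α] [Fintype β]
    (X : Matrix (α × β) (α × β) ℂ) (a : α → ℂ) (b : β → ℂ) :
    star (fun p => a p.1 * b p.2) ⬝ᵥ X *ᵥ (fun p => a p.1 * b p.2) =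
      star a ⬝ᵥ (of fun i i' => star b ⬝ᵥ (of fun j j' => X (i, j) (i', j')) *ᵥ b) *ᵥ a := by
  simp only [dotProduct, mulVec, Pi.star_apply, star_mul', of_apply, Fintype.sum_prod_type,
    Finset.mul_sum, Finset.sum_mul]
  refine Finset.sum_congr rfl fun i _ => ?_
  rw [Finset.sum_comm]
  exact Finset.sum_congr rfl fun i' _ => Finset.sum_congr rfl fun j _ =>
    Finset.sum_congr rfl fun j' _ => by ring

theorem Matrix.eq_zero_of_forall_star_dotProduct_mulVec_prod {α β : Type*} [Fintype α]
    [Fintype β] [DecidableEq α] [DecidableEq β] {X : Matrix (α × β) (α × β) ℂ}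
    (h : ∀ (a : α → ℂ) (b : β → ℂ),
      star (fun p => a p.1 * b p.2) ⬝ᵥ X *ᵥ (fun p => a p.1 * b p.2) = 0) : X = 0 := by
  have hslice (b : β → ℂ) (i i' : α) :
      star b ⬝ᵥ (of fun j j' => X (i, j) (i', j')) *ᵥ b = 0 :=
    congrFun₂ (eq_zero_of_forall_star_dotProduct_mulVec_self fun a =>
      (star_dotProduct_mulVec_prod X a b).symm.trans (h a b)) i i'
  ext ⟨i, j⟩ ⟨i', j'⟩
  exact congrFun₂ (eq_zero_of_forall_star_dotProduct_mulVec_self fun b => hslice b i i') j j'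

theorem Matrix.star_dotProduct_conjTranspose_mul_self_mulVec {ι : Type*} [Fintype ι]
    (U : Matrix ι ι ℂ) (v : ι → ℂ) :
    star v ⬝ᵥ (Uᴴ * U) *ᵥ v = star (U *ᵥ v) ⬝ᵥ U *ᵥ v := by
  rw [← mulVec_mulVec, dotProduct_mulVec, star_mulVec]

theorem star_dotProduct_self_eq_nrm_sq {ι : Type} [Fintype ι] (v : ι → ℂ) :
    star v ⬝ᵥ v = ((nrm v ^ 2 : ℝ) : ℂ) := by
  rw [nrm, Real.sq_sqrt (Finset.sum_nonneg fun i _ => Complex.normSq_nonneg (v i))]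
  push_cast
  exact Finset.sum_congr rfl fun i _ => (Complex.normSq_eq_conj_mul_self).symm

/-- If `U ∈ M_m ⊗ M_n` preserves the Euclidean norm of all separable
(product) vectors `a ⊗ b ∈ ℂ^m ⊗ ℂ^n`, then `U` is unitary. -/
theorem norm_preserving_on_separable_implies_unitary (m n : ℕ)
    (U : Matrix (Fin m × Fin n) (Fin m × Fin n) ℂ)
    (h : ∀ (a : Fin m → ℂ) (b : Fin n → ℂ),
      nrm (U.mulVec (tens a b)) = nrm (tens a b)) :
    U.conjTranspose * U = 1 := by
  have hprod (a : Fin m → ℂ) (b : Fin n → ℂ) :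
      star (tens a b) ⬝ᵥ (Uᴴ * U - 1) *ᵥ tens a b = 0 := by
    rw [sub_mulVec, one_mulVec, dotProduct_sub, star_dotProduct_conjTranspose_mul_self_mulVec,
      star_dotProduct_self_eq_nrm_sq, star_dotProduct_self_eq_nrm_sq, h, sub_self]
  exact sub_eq_zero.mp (eq_zero_of_forall_star_dotProduct_mulVec_prod hprod)
end
end
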